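/- Substitution identity for the piecing-out resolvent: let Φ_i, u_i ≥ 0 for i ∈ ℕ, fix j ∈ ℕ, and set Rκ_i = Φ_i + A·u_i where A = μ_j u_j/(κ + S) with S = α μ(u) > 0 and κ > 0. Let π be a probability measure on ℕ ∪ {∂} with π(u) < (κ+S)/κ, let c = κ/(κ+S) and v_i = c·u_i. Then R̃_i := Rκ_i + (π(Rκ)/(1 − π(v)))·v_i equals Φ_i + u_i · (κ π(Φ) + μ_j u_j)/(κ − κ π(u) + S), provided all series π(Φ) = Σ_k Φ_k π_k and π(u) = Σ_k u_k π_k converge (with Φ_∂ = u_∂ = 0). -/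

import Mathlib

/-! Both series are linear in the integrand, so `π(Rκ) = π(Φ) + A π(u)` and `π(v) = c π(u)`.
With `D = κ - κ π(u) + S > 0` one has `1 - π(v) = D / (κ + S)`, and in the coefficient of `u_i`
the two contributions `± κ μ_j u_j π(u) / ((κ + S) D)` cancel, leaving `(κ π(Φ) + μ_j u_j) / D`. -/

lemma tsum_add_const_mul_mul {ι : Type*} {f g w : ι → ℝ} (a : ℝ)
    (hf : Summable (fun k => f k * w k)) (hg : Summable (fun k => g k * w k)) :
    ∑' k, (f k + a * g k) * w k = ∑' k, f k * w k + a * ∑' k, g k * w k := by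
  simp_rw [add_mul, mul_assoc]
  rw [hf.tsum_add (hg.mul_left a), tsum_mul_left]

lemma tsum_const_mul_mul {ι : Type*} (c : ℝ) (g w : ι → ℝ) :
    ∑' k, c * g k * w k = c * ∑' k, g k * w k := by
  simp_rw [mul_assoc]
  exact tsum_mul_left

lemma one_sub_div_mul_eq {κ S U : ℝ} (hκS : κ + S ≠ 0) :
    1 - κ / (κ + S) * U = (κ - κ * U + S) / (κ + S) := by
  field_simp
  ring

lemma piecing_out_coeff_eq {φ x P U m κ S D : ℝ} (hκS : κ + S ≠ 0) (hD : D ≠ 0)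
    (hDdef : κ - κ * U + S = D) :
    (φ + m / (κ + S) * x) + (P + m / (κ + S) * U) / (1 - κ / (κ + S) * U) * (κ / (κ + S) * x) =
      φ + x * ((κ * P + m) / D) := by
  rw [one_sub_div_mul_eq hκS, hDdef]
  field_simp
  linear_combination (-(m * x)) * hDdef

theorem piecing_out_substitution_general
    (Φ u π : ℕ → ℝ) (mjuj κ S : ℝ)
    (hκ : 0 < κ) (hS : 0 < S)
    (hΦπ : Summable (fun k => Φ k * π k)) (huπ : Summable (fun k => u k * π k))
    (hπu : (∑' k : ℕ, u k * π k) < (κ + S) / κ) :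
    ∀ i : ℕ,
      (Φ i + (mjuj / (κ + S)) * u i) +
        ((∑' k : ℕ, (Φ k + (mjuj / (κ + S)) * u k) * π k) /
          (1 - ∑' k : ℕ, (κ / (κ + S)) * u k * π k)) * ((κ / (κ + S)) * u i) =
      Φ i + u i * ((κ * (∑' k : ℕ, Φ k * π k) + mjuj) /
        (κ - κ * (∑' k : ℕ, u k * π k) + S)) := by
  intro i
  have hD : 0 < κ - κ * ∑' k, u k * π k + S := by
    have hκU := (lt_div_iff₀ hκ).mp hπu
    linarith
  rw [tsum_add_const_mul_mul _ hΦπ huπ, tsum_const_mul_mul]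
  exact piecing_out_coeff_eq (by positivity) hD.ne' rfl

/-- Substitution identity for the piecing-out resolvent: with
`Rκ_i = Φ_i + A u_i`, `A = μ_j u_j/(κ + S)`, `S = α μ(u) > 0`, `κ > 0`,
`c = κ/(κ + S)`, `v_i = c u_i`, and a probability measure `π` on `ℕ ∪ {∂}`
(with `Φ_∂ = u_∂ = 0`, so sums over `k ∈ ℕ` suffice) satisfying
`π(u) < (κ + S)/κ`, one has for every `i`
`Rκ_i + (π(Rκ)/(1 - π(v))) v_i = Φ_i + u_i (κ π(Φ) + μ_j u_j)/(κ - κ π(u) + S)`. -/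
theorem piecing_out_substitution
    (Φ u π : ℕ → ℝ) (mjuj κ S : ℝ)
    (hΦ : ∀ k, 0 ≤ Φ k) (hu : ∀ k, 0 ≤ u k) (hπ : ∀ k, 0 ≤ π k)
    (hmj : 0 ≤ mjuj) (hκ : 0 < κ) (hS : 0 < S)
    (hΦπ : Summable (fun k => Φ k * π k)) (huπ : Summable (fun k => u k * π k))
    (hπu : (∑' k : ℕ, u k * π k) < (κ + S) / κ) :
    ∀ i : ℕ,
      (Φ i + (mjuj / (κ + S)) * u i) +
        ((∑' k : ℕ, (Φ k + (mjuj / (κ + S)) * u k) * π k) /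
          (1 - ∑' k : ℕ, (κ / (κ + S)) * u k * π k)) * ((κ / (κ + S)) * u i) =
      Φ i + u i * ((κ * (∑' k : ℕ, Φ k * π k) + mjuj) /
        (κ - κ * (∑' k : ℕ, u k * π k) + S)) :=
  piecing_out_substitution_general Φ u π mjuj κ S hκ hS hΦπ huπ hπu
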